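/- There is a unique ℂ-algebra homomorphism ρ : ℂCl(2m) → End_ℂ(P) such that ρ(ι(f_I)) = Γ_I for every standard basis vector f_I of ℂ^{2m} (I = 1, …, 2m), and this homomorphism ρ is bijective; hence the complex Clifford algebra in dimension 2m is isomorphic as a ℂ-algebra to the full endomorphism algebra of the 2^m-dimensional space P. -/

import Mathlib

noncomputable section

/-- The spinor space `P`: complex functions on subsets of `Fin m`
(the fermionic Fock model of the exterior algebra of `ℂ^m`). -/
abbrev SpinorSpace (m : ℕ) := Finset (Fin m) → ℂ

/-- The creation operator `c_j`. -/
def creation {m : ℕ} (j : Fin m) (f : SpinorSpace m) : SpinorSpace m := fun S =>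
  if j ∈ S then (-1 : ℂ) ^ (S.filter fun i => i < j).card * f (S.erase j) else 0

/-- The annihilation operator `a_j`. -/
def annihilation {m : ℕ} (j : Fin m) (f : SpinorSpace m) : SpinorSpace m := fun S =>
  if j ∈ S then 0 else (-1 : ℂ) ^ (S.filter fun i => i < j).card * f (insert j S)

/-- The gamma operators `Γ_I`, `I = 1, …, 2m`, here indexed by `Fin (2 * m)` (0-based):
`Γ_j = c_j + a_j` and `Γ_{m+j} = i (c_j − a_j)` for `j = 1, …, m`. -/
def gammaOp {m : ℕ} (I : Fin (2 * m)) (f : SpinorSpace m) : SpinorSpace m :=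
  if h : (I : ℕ) < m then
    creation ⟨(I : ℕ), h⟩ f + annihilation ⟨(I : ℕ), h⟩ f
  else
    Complex.I • (creation ⟨(I : ℕ) - m, by have := I.isLt; omega⟩ f
      - annihilation ⟨(I : ℕ) - m, by have := I.isLt; omega⟩ f)

/-- The Hermitian inner product `⟨f, g⟩ = Σ_S conj (f S) * g S` on the spinor space. -/
def herm {m : ℕ} (f g : SpinorSpace m) : ℂ :=
  ∑ S : Finset (Fin m), (starRingEnd ℂ) (f S) * g S

/-- The standard quadratic form `Q v = Σ_I v_I²` on `ℂ^{2m}`. -/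
def Qstd (m : ℕ) : QuadraticForm ℂ (Fin (2 * m) → ℂ) :=
  QuadraticMap.weightedSumSquares ℂ (fun _ : Fin (2 * m) => (1 : ℂ))

/-!
Since the `c_j, a_j` satisfy the canonical anticommutation relations, the `Γ_I` satisfy the
Clifford relations `Γ_I Γ_J + Γ_J Γ_I = 2 δ_IJ`, so the universal property of `ℂCl(2m)` gives
`ρ`, unique because the `ι f_I` generate. The image of `ρ` contains
`c_j = (Γ_j - i Γ_{m+j}) / 2` and `a_j = (Γ_j + i Γ_{m+j}) / 2`, hence the vacuum projection
`|∅⟩⟨∅| = ∏_j a_j c_j` and then every matrix unit `|S⟩⟨T| = ± c_S |∅⟩⟨∅| a_T`: `ρ` is onto.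
Both algebras have dimension `2^{2m}` (`ℂCl(2m)` is linearly isomorphic to the exterior algebra
of `ℂ^{2m}`), so `ρ` is bijective.
-/

section CanonicalAnticommutation

variable {K A ι : Type*} [CommRing K] [Ring A] [Algebra K A] [DecidableEq ι]
  {c a : ι → A}

theorem smul_add_smul_anticomm
    (hcc : ∀ j k, c j * c k + c k * c j = 0) (haa : ∀ j k, a j * a k + a k * a j = 0)
    (hac : ∀ j k, a j * c k + c k * a j = if j = k then 1 else 0)
    (α β γ δ : K) (j k : ι) :
    (α • c j + β • a j) * (γ • c k + δ • a k) + (γ • c k + δ • a k) * (α • c j + β • a j) =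
      if j = k then (α * δ + β * γ) • 1 else 0 := by
  have expand : (α • c j + β • a j) * (γ • c k + δ • a k) +
      (γ • c k + δ • a k) * (α • c j + β • a j) =
      (α * γ) • (c j * c k + c k * c j) + (β * δ) • (a j * a k + a k * a j) +
        (α * δ) • (a k * c j + c j * a k) + (β * γ) • (a j * c k + c k * a j) := by
    simp only [add_mul, mul_add, smul_mul_smul_comm]
    module
  rw [expand, hcc, haa, hac, hac]
  by_cases h : j = k
  · subst h; simp only [if_true]; module
  · simp [h, Ne.symm h]

end CanonicalAnticommutation

theorem sum_smul_mul_self_of_anticomm {K A ι : Type*} [Field K] [NeZero (2 : K)] [Ring A]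
    [Algebra K A] [Fintype ι] [DecidableEq ι] {e : ι → A}
    (he : ∀ i j, e i * e j + e j * e i = if i = j then 2 else 0) (v : ι → K) :
    (∑ i, v i • e i) * (∑ i, v i • e i) = algebraMap K A (∑ i, v i * v i) := by
  refine smul_right_injective A (two_ne_zero (α := K)) ?_
  have swap : ∑ i, ∑ j, (v i * v j) • (e i * e j) = ∑ i, ∑ j, (v i * v j) • (e j * e i) := by
    rw [Finset.sum_comm]
    simp only [mul_comm (v _) (v _)]
  calc (2 : K) • ((∑ i, v i • e i) * (∑ i, v i • e i))
      = ∑ i, ∑ j, (v i * v j) • (e i * e j + e j * e i) := by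
        simp only [Finset.sum_mul_sum, smul_mul_smul_comm, smul_add, Finset.sum_add_distrib,
          ← swap, two_smul]
    _ = ∑ i, (v i * v i) • (2 : A) := by
        simp [he, smul_ite]
    _ = (2 : K) • algebraMap K A (∑ i, v i * v i) := by
        rw [Algebra.algebraMap_eq_smul_one, Finset.sum_smul, Finset.smul_sum]
        refine Finset.sum_congr rfl fun i _ => ?_
        rw [← map_ofNat (algebraMap K A) 2, Algebra.algebraMap_eq_smul_one]
        module

namespace CliffordAlgebra

theorem finrank_eq_two_pow {R M : Type*} [CommRing R] [StrongRankCondition R]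
    [Invertible (2 : R)] [AddCommGroup M] [Module R M] [Module.Free R M] [Module.Finite R M]
    (Q : QuadraticForm R M) :
    Module.finrank R (CliffordAlgebra Q) = 2 ^ Module.finrank R M := by
  let b := ((Module.finBasis R M).ExteriorAlgebra).map (equivExterior Q).symm
  rw [Module.finrank_eq_card_basis b, Fintype.card_finset, Fintype.card_fin]

theorem algHom_ext_piSingle {R n A : Type*} [CommRing R] [Finite n] [DecidableEq n]
    [Semiring A] [Algebra R A] {Q : QuadraticForm R (n → R)} {f g : CliffordAlgebra Q →ₐ[R] A}
    (h : ∀ i, f (ι Q (Pi.single i 1)) = g (ι Q (Pi.single i 1))) : f = g :=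
  hom_ext <| (Pi.basisFun R n).ext fun i => by simpa using h i

end CliffordAlgebra

namespace SpinorSpace

variable {m : ℕ}

def orderSign (S : Finset (Fin m)) (j : Fin m) : ℂ := (-1) ^ (S.filter (· < j)).card

theorem orderSign_insert {S : Finset (Fin m)} {k : Fin m} (hk : k ∉ S) (j : Fin m) :
    orderSign (insert k S) j = (if k < j then -1 else 1) * orderSign S j := by
  simp only [orderSign, Finset.filter_insert]
  split
  · rw [Finset.card_insert_of_notMem (by simp [hk]), pow_succ, mul_comm]
  · rw [one_mul]

theorem orderSign_erase {S : Finset (Fin m)} {k : Fin m} (hk : k ∈ S) (j : Fin m) :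
    orderSign (S.erase k) j = (if k < j then -1 else 1) * orderSign S j := by
  conv_rhs => rw [← Finset.insert_erase hk, orderSign_insert (Finset.notMem_erase k S)]
  split <;> simp

theorem orderSign_mul_self (S : Finset (Fin m)) (j : Fin m) :
    orderSign S j * orderSign S j = 1 := by
  simp [orderSign, ← pow_add]

theorem creation_apply (j : Fin m) (f : SpinorSpace m) (S : Finset (Fin m)) :
    creation j f S = if j ∈ S then orderSign S j * f (S.erase j) else 0 := rfl

theorem annihilation_apply (j : Fin m) (f : SpinorSpace m) (S : Finset (Fin m)) :
    annihilation j f S = if j ∈ S then 0 else orderSign S j * f (insert j S) := rfl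

def creationEnd (j : Fin m) : Module.End ℂ (SpinorSpace m) where
  toFun := creation j
  map_add' f g := funext fun S => by simp only [creation_apply, Pi.add_apply]; split <;> ring
  map_smul' c f := funext fun S => by
    simp only [creation_apply, Pi.smul_apply, smul_eq_mul, RingHom.id_apply]; split <;> ring

def annihilationEnd (j : Fin m) : Module.End ℂ (SpinorSpace m) where
  toFun := annihilation j
  map_add' f g := funext fun S => by simp only [annihilation_apply, Pi.add_apply]; split <;> ring
  map_smul' c f := funext fun S => by
    simp only [annihilation_apply, Pi.smul_apply, smul_eq_mul, RingHom.id_apply]; split <;> ring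

@[simp] theorem creationEnd_apply (j : Fin m) (f : SpinorSpace m) :
    creationEnd j f = creation j f := rfl

@[simp] theorem annihilationEnd_apply (j : Fin m) (f : SpinorSpace m) :
    annihilationEnd j f = annihilation j f := rfl

theorem creationEnd_anticomm (j k : Fin m) :
    creationEnd j * creationEnd k + creationEnd k * creationEnd j = 0 := by
  ext f S
  rcases eq_or_ne j k with rfl | hjk
  · simp [creation_apply]
  by_cases hj : j ∈ S <;> by_cases hk : k ∈ S <;>
    simp [creation_apply, hj, hk, Finset.mem_erase, hjk, hjk.symm]
  rw [Finset.erase_right_comm, orderSign_erase hj k, orderSign_erase hk j]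
  rcases lt_or_gt_of_ne hjk with h | h <;> simp [h, h.not_gt] <;> ring

theorem annihilationEnd_anticomm (j k : Fin m) :
    annihilationEnd j * annihilationEnd k + annihilationEnd k * annihilationEnd j = 0 := by
  ext f S
  rcases eq_or_ne j k with rfl | hjk
  · simp [annihilation_apply]
  by_cases hj : j ∈ S <;> by_cases hk : k ∈ S <;>
    simp [annihilation_apply, hj, hk, Finset.mem_insert, hjk, hjk.symm]
  rw [Finset.insert_comm, orderSign_insert hj k, orderSign_insert hk j]
  rcases lt_or_gt_of_ne hjk with h | h <;> simp [h, h.not_gt] <;> ring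

theorem annihilationEnd_creationEnd_anticomm (j k : Fin m) :
    annihilationEnd j * creationEnd k + creationEnd k * annihilationEnd j =
      if j = k then 1 else 0 := by
  ext f S
  rcases eq_or_ne j k with rfl | hjk
  · by_cases hj : j ∈ S <;> simp [annihilation_apply, creation_apply, hj]
    · rw [orderSign_erase hj j, if_neg (lt_irrefl j), one_mul, ← mul_assoc, orderSign_mul_self,
        one_mul]
    · rw [orderSign_insert hj j, if_neg (lt_irrefl j), one_mul, ← mul_assoc, orderSign_mul_self,
        one_mul]
  · by_cases hj : j ∈ S <;> by_cases hk : k ∈ S <;>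
      simp [annihilation_apply, creation_apply, hj, hk, hjk, hjk.symm]
    rw [Finset.erase_insert_of_ne hjk, orderSign_insert hj k, orderSign_erase hk j]
    rcases lt_or_gt_of_ne hjk with h | h <;> simp [h, h.not_gt] <;> ring

/-- `Γ_I = α • c_j + β • a_j` with `(α, β) = gammaCoeff a`, where `I = j + m a` is
`finProdFinEquiv (a, j)`. -/
def gammaCoeff : Fin 2 → ℂ × ℂ := ![(1, 1), (Complex.I, -Complex.I)]

def gammaEnd (p : Fin 2 × Fin m) : Module.End ℂ (SpinorSpace m) :=
  (gammaCoeff p.1).1 • creationEnd p.2 + (gammaCoeff p.1).2 • annihilationEnd p.2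

theorem gammaEnd_anticomm (p q : Fin 2 × Fin m) :
    gammaEnd p * gammaEnd q + gammaEnd q * gammaEnd p = if p = q then 2 else 0 := by
  rw [gammaEnd, gammaEnd, smul_add_smul_anticomm creationEnd_anticomm annihilationEnd_anticomm
    annihilationEnd_creationEnd_anticomm]
  obtain ⟨a, j⟩ := p
  obtain ⟨b, k⟩ := q
  by_cases hjk : j = k
  · subst hjk
    fin_cases a <;> fin_cases b <;> simp [gammaCoeff, two_smul, one_add_one_eq_two]
  · simp [hjk]

theorem gammaEnd_apply (p : Fin 2 × Fin m) (f : SpinorSpace m) :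
    gammaEnd p f = gammaOp (finProdFinEquiv p) f := by
  obtain ⟨a, j⟩ := p
  fin_cases a <;> simp [gammaEnd, gammaOp, gammaCoeff, sub_eq_add_neg]

def gammaMap (m : ℕ) : (Fin (2 * m) → ℂ) →ₗ[ℂ] Module.End ℂ (SpinorSpace m) :=
  Fintype.linearCombination ℂ (gammaEnd ∘ finProdFinEquiv.symm)

theorem gammaMap_mul_self (m : ℕ) (v : Fin (2 * m) → ℂ) :
    gammaMap m v * gammaMap m v = algebraMap ℂ _ (Qstd m v) := by
  have hQ : Qstd m v = ∑ I, v I * v I := by simp [Qstd, QuadraticMap.weightedSumSquares_apply]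
  rw [gammaMap, Fintype.linearCombination_apply, hQ]
  refine sum_smul_mul_self_of_anticomm (fun I J => ?_) v
  simpa only [Function.comp_apply, EmbeddingLike.apply_eq_iff_eq] using
    gammaEnd_anticomm (finProdFinEquiv.symm I) (finProdFinEquiv.symm J)

def cliffordRep (m : ℕ) : CliffordAlgebra (Qstd m) →ₐ[ℂ] Module.End ℂ (SpinorSpace m) :=
  CliffordAlgebra.lift (Qstd m) ⟨gammaMap m, gammaMap_mul_self m⟩

theorem cliffordRep_ι_single (I : Fin (2 * m)) :
    cliffordRep m (CliffordAlgebra.ι (Qstd m) (Pi.single I 1)) =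
      gammaEnd (finProdFinEquiv.symm I) := by
  simp [cliffordRep, gammaMap]

theorem cliffordRep_ι_single_apply (I : Fin (2 * m)) (f : SpinorSpace m) :
    cliffordRep m (CliffordAlgebra.ι (Qstd m) (Pi.single I 1)) f = gammaOp I f := by
  rw [cliffordRep_ι_single, gammaEnd_apply, Equiv.apply_symm_apply]

def matrixUnit (S T : Finset (Fin m)) : Module.End ℂ (SpinorSpace m) :=
  (LinearMap.proj T).smulRight (Pi.single S 1)

theorem matrixUnit_apply (S T : Finset (Fin m)) (f : SpinorSpace m) :
    matrixUnit S T f = f T • Pi.single S 1 := rfl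

theorem sum_smul_matrixUnit (x : Module.End ℂ (SpinorSpace m)) :
    ∑ S, ∑ T, x (Pi.single T 1) S • matrixUnit S T = x := by
  refine (Pi.basisFun ℂ _).ext fun T => funext fun U => ?_
  simp [matrixUnit_apply, Finset.sum_apply, Pi.single_apply]

theorem annihilationEnd_mul_creationEnd_self (j : Fin m) :
    annihilationEnd j * creationEnd j =
      Algebra.lmul ℂ (SpinorSpace m) (fun S => if j ∈ S then 0 else 1) := by
  ext f S
  by_cases hj : j ∈ S <;> simp [annihilation_apply, creation_apply, hj]
  rw [orderSign_insert hj, if_neg (lt_irrefl j), one_mul, ← mul_assoc, orderSign_mul_self,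
    one_mul]

theorem prod_ite_mem_zero_one :
    ∏ j, (fun S => if j ∈ S then 0 else 1) = (Pi.single ∅ 1 : SpinorSpace m) := by
  ext S
  rw [Finset.prod_apply, Pi.single_apply]
  split_ifs with hS
  · simp [hS]
  · obtain ⟨j, hj⟩ := Finset.nonempty_iff_ne_empty.2 hS
    exact Finset.prod_eq_zero (Finset.mem_univ j) (if_pos hj)

theorem matrixUnit_empty_empty :
    matrixUnit ∅ ∅ = Algebra.lmul ℂ (SpinorSpace m) (Pi.single ∅ 1) :=
  LinearMap.ext fun f => funext fun S => by
    by_cases hS : S = ∅ <;> simp [matrixUnit_apply, hS]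

theorem creationEnd_mul_matrixUnit {j : Fin m} {S : Finset (Fin m)} (hj : j ∉ S)
    (T : Finset (Fin m)) :
    creationEnd j * matrixUnit S T = orderSign S j • matrixUnit (insert j S) T := by
  refine LinearMap.ext fun f => funext fun U => ?_
  by_cases hjU : j ∈ U
  · by_cases hU : U = insert j S
    · subst hU
      simp [creation_apply, matrixUnit_apply, Finset.erase_insert hj, orderSign_insert hj,
        mul_comm]
    · have hS : U.erase j ≠ S := fun h => hU (by rw [← h, Finset.insert_erase hjU])
      simp [creation_apply, matrixUnit_apply, hjU, hU, hS]
  · have hU : U ≠ insert j S := fun h => hjU (h ▸ Finset.mem_insert_self j S)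
    simp [creation_apply, matrixUnit_apply, hjU, hU]

theorem matrixUnit_mul_annihilationEnd {j : Fin m} {T : Finset (Fin m)} (hj : j ∉ T)
    (S : Finset (Fin m)) :
    matrixUnit S T * annihilationEnd j = orderSign T j • matrixUnit S (insert j T) := by
  refine LinearMap.ext fun f => funext fun U => ?_
  simp [matrixUnit_apply, annihilation_apply, hj, mul_assoc]

section Subalgebra

variable {A : Subalgebra ℂ (Module.End ℂ (SpinorSpace m))}

theorem matrixUnit_empty_empty_mem (hc : ∀ j, creationEnd j ∈ A)
    (ha : ∀ j, annihilationEnd j ∈ A) : matrixUnit ∅ ∅ ∈ A := by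
  have h : ∏ j, (fun S => if j ∈ S then 0 else 1) ∈ A.comap (Algebra.lmul ℂ (SpinorSpace m)) :=
    Subalgebra.prod_mem _ fun j _ => by
      rw [Subalgebra.mem_comap, ← annihilationEnd_mul_creationEnd_self]
      exact mul_mem (ha j) (hc j)
  rw [prod_ite_mem_zero_one] at h
  rwa [matrixUnit_empty_empty]

theorem matrixUnit_mem (hc : ∀ j, creationEnd j ∈ A)
    (ha : ∀ j, annihilationEnd j ∈ A) (S T : Finset (Fin m)) : matrixUnit S T ∈ A := by
  induction S using Finset.induction_on with
  | empty =>
    induction T using Finset.induction_on with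
    | empty => exact matrixUnit_empty_empty_mem hc ha
    | insert j T hj ih =>
      rw [← one_smul ℂ (matrixUnit _ _), ← orderSign_mul_self T j, mul_smul,
        ← matrixUnit_mul_annihilationEnd hj]
      exact A.smul_mem (mul_mem ih (ha j)) _
  | insert j S hj ih =>
    rw [← one_smul ℂ (matrixUnit _ _), ← orderSign_mul_self S j, mul_smul,
      ← creationEnd_mul_matrixUnit hj]
    exact A.smul_mem (mul_mem (hc j) ih) _

theorem eq_top_of_creationEnd_mem_of_annihilationEnd_mem (hc : ∀ j, creationEnd j ∈ A)
    (ha : ∀ j, annihilationEnd j ∈ A) : A = ⊤ :=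
  eq_top_iff.2 fun x _ => sum_smul_matrixUnit x ▸
    A.sum_mem fun S _ => A.sum_mem fun T _ => A.smul_mem (matrixUnit_mem hc ha S T) _

end Subalgebra

theorem creationEnd_eq_gammaEnd (j : Fin m) :
    creationEnd j = (2 : ℂ)⁻¹ • (gammaEnd (0, j) - Complex.I • gammaEnd (1, j)) := by
  simp only [gammaEnd, gammaCoeff, smul_add, smul_smul]
  simp [Complex.I_mul_I]
  module

theorem annihilationEnd_eq_gammaEnd (j : Fin m) :
    annihilationEnd j = (2 : ℂ)⁻¹ • (gammaEnd (0, j) + Complex.I • gammaEnd (1, j)) := by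
  simp only [gammaEnd, gammaCoeff, smul_add, smul_smul]
  simp [Complex.I_mul_I]
  module

theorem gammaEnd_mem_range (p : Fin 2 × Fin m) : gammaEnd p ∈ (cliffordRep m).range :=
  ⟨CliffordAlgebra.ι (Qstd m) (Pi.single (finProdFinEquiv p) 1), by
    rw [AlgHom.toRingHom_eq_coe, RingHom.coe_coe, cliffordRep_ι_single, Equiv.symm_apply_apply]⟩

theorem cliffordRep_surjective (m : ℕ) : Function.Surjective (cliffordRep m) := by
  refine (AlgHom.range_eq_top _).1 (eq_top_of_creationEnd_mem_of_annihilationEnd_mem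
    (fun j => ?_) (fun j => ?_))
  · rw [creationEnd_eq_gammaEnd]
    exact Subalgebra.smul_mem _ (sub_mem (gammaEnd_mem_range _)
      (Subalgebra.smul_mem _ (gammaEnd_mem_range _) _)) _
  · rw [annihilationEnd_eq_gammaEnd]
    exact Subalgebra.smul_mem _ (add_mem (gammaEnd_mem_range _)
      (Subalgebra.smul_mem _ (gammaEnd_mem_range _) _)) _

theorem finrank_end (m : ℕ) :
    Module.finrank ℂ (Module.End ℂ (SpinorSpace m)) = 2 ^ (2 * m) := by
  rw [Module.finrank_linearMap, Module.finrank_fintype_fun_eq_card, Fintype.card_finset,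
    Fintype.card_fin, ← pow_add, two_mul]

theorem cliffordRep_bijective (m : ℕ) : Function.Bijective (cliffordRep m) := by
  have hdim : Module.finrank ℂ (CliffordAlgebra (Qstd m)) =
      Module.finrank ℂ (Module.End ℂ (SpinorSpace m)) := by
    rw [CliffordAlgebra.finrank_eq_two_pow, Module.finrank_fin_fun, finrank_end]
  have : FiniteDimensional ℂ (CliffordAlgebra (Qstd m)) :=
    Module.finite_of_finrank_pos (hdim ▸ Module.finrank_pos)
  have hsurj := cliffordRep_surjective m
  exact ⟨(LinearMap.injective_iff_surjective_of_finrank_eq_finrank hdim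
    (f := (cliffordRep m).toLinearMap)).2 hsurj, hsurj⟩

end SpinorSpace

theorem cliffordAlgebra_iso_end (m : ℕ) :
    (∃! ρ : CliffordAlgebra (Qstd m) →ₐ[ℂ] Module.End ℂ (SpinorSpace m),
      ∀ (I : Fin (2 * m)) (f : SpinorSpace m),
        ρ (CliffordAlgebra.ι (Qstd m) (Pi.single I 1)) f = gammaOp I f) ∧
    (∀ ρ : CliffordAlgebra (Qstd m) →ₐ[ℂ] Module.End ℂ (SpinorSpace m),
      (∀ (I : Fin (2 * m)) (f : SpinorSpace m),
        ρ (CliffordAlgebra.ι (Qstd m) (Pi.single I 1)) f = gammaOp I f) →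
      Function.Bijective ρ) := by
  have eq_cliffordRep : ∀ ρ : CliffordAlgebra (Qstd m) →ₐ[ℂ] Module.End ℂ (SpinorSpace m),
      (∀ I f, ρ (CliffordAlgebra.ι (Qstd m) (Pi.single I 1)) f = gammaOp I f) →
        ρ = SpinorSpace.cliffordRep m := fun ρ h =>
    CliffordAlgebra.algHom_ext_piSingle fun I =>
      LinearMap.ext fun f => (h I f).trans (SpinorSpace.cliffordRep_ι_single_apply I f).symm
  exact ⟨⟨SpinorSpace.cliffordRep m, SpinorSpace.cliffordRep_ι_single_apply, eq_cliffordRep⟩,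
    fun ρ h => eq_cliffordRep ρ h ▸ SpinorSpace.cliffordRep_bijective m⟩
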